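/- The system is globally solvable at the Fourier coefficient level if and only if the Diophantine condition (DC) holds. -/

import Mathlib

open Real

/-- Euclidean norm of an integer vector `τ ∈ ℤ^m`. -/
noncomputable def eNormZ {m : ℕ} (τ : Fin m → ℤ) : ℝ :=
  Real.sqrt (∑ i, ((τ i : ℝ)) ^ 2)

/-- The weight `w(τ,j) = ‖τ‖^(1/σ) + j^(1/(2nμ))`. -/
noncomputable def wgt (m n : ℕ) (σ μ : ℝ) (τ : Fin m → ℤ) (j : ℕ) : ℝ :=
  eNormZ τ ^ (1 / σ) + (j : ℝ) ^ (1 / (2 * n * μ))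

/-- GS-decay: `|a(τ,j)| ≤ C exp(-ε w(τ,j))` for some `C, ε > 0`. -/
def GSDecay (m n : ℕ) (σ μ : ℝ) (a : (Fin m → ℤ) → ℕ → ℂ) : Prop :=
  ∃ C > 0, ∃ ε > 0, ∀ τ j, ‖a τ j‖ ≤ C * Real.exp (-ε * wgt m n σ μ τ j)

/-- GS-growth: for all `ε > 0` there is `C > 0` with `|a(τ,j)| ≤ C exp(ε w(τ,j))`. -/
def GSGrowth (m n : ℕ) (σ μ : ℝ) (a : (Fin m → ℤ) → ℕ → ℂ) : Prop :=
  ∀ ε > 0, ∃ C > 0, ∀ τ j, ‖a τ j‖ ≤ C * Real.exp (ε * wgt m n σ μ τ j)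

/-- Symbol of the operator `L_r = Q_r(D_t) + d_r P(x,D_x)`: `σ_r(τ,j) = Q_r(τ) + d_r λ_j`. -/
noncomputable def symb {m ℓ : ℕ} (Q : Fin ℓ → MvPolynomial (Fin m) ℂ)
    (d : Fin ℓ → ℂ) (lam : ℕ → ℝ) (r : Fin ℓ) (τ : Fin m → ℤ) (j : ℕ) : ℂ :=
  MvPolynomial.eval (fun i => ((τ i : ℂ))) (Q r) + d r * (lam j : ℂ)

/-- `‖σ(τ,j)‖ = max_{1 ≤ r ≤ ℓ} |σ_r(τ,j)|`. -/
noncomputable def symbNorm {m ℓ : ℕ} (Q : Fin ℓ → MvPolynomial (Fin m) ℂ)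
    (d : Fin ℓ → ℂ) (lam : ℕ → ℝ) (τ : Fin m → ℤ) (j : ℕ) : ℝ :=
  ⨆ r : Fin ℓ, ‖symb Q d lam r τ j‖

/-- The Diophantine condition (DC). -/
def DioCond (m n ℓ : ℕ) (σ μ : ℝ) (Q : Fin ℓ → MvPolynomial (Fin m) ℂ)
    (d : Fin ℓ → ℂ) (lam : ℕ → ℝ) : Prop :=
  ∀ ε > 0, ∃ C > 0, ∀ τ j, symbNorm Q d lam τ j ≠ 0 →
    symbNorm Q d lam τ j ≥ C * Real.exp (-ε * wgt m n σ μ τ j)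

/-- Global hypoellipticity at the Fourier coefficient level. -/
def GloballyHypoelliptic (m n ℓ : ℕ) (σ μ : ℝ) (Q : Fin ℓ → MvPolynomial (Fin m) ℂ)
    (d : Fin ℓ → ℂ) (lam : ℕ → ℝ) : Prop :=
  ∀ u : (Fin m → ℤ) → ℕ → ℂ, GSGrowth m n σ μ u →
    (∀ r : Fin ℓ, GSDecay m n σ μ (fun τ j => symb Q d lam r τ j * u τ j)) →
    GSDecay m n σ μ u

/-- Admissible families (compatibility conditions). -/
def Admissible {m ℓ : ℕ} (Q : Fin ℓ → MvPolynomial (Fin m) ℂ) (d : Fin ℓ → ℂ)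
    (lam : ℕ → ℝ) (f : Fin ℓ → (Fin m → ℤ) → ℕ → ℂ) : Prop :=
  (∀ r s τ j, symb Q d lam r τ j * f s τ j = symb Q d lam s τ j * f r τ j) ∧
  (∀ r τ j, symb Q d lam r τ j = 0 → f r τ j = 0)

/-- Global solvability at the Fourier coefficient level. -/
def GloballySolvable (m n ℓ : ℕ) (σ μ : ℝ) (Q : Fin ℓ → MvPolynomial (Fin m) ℂ)
    (d : Fin ℓ → ℂ) (lam : ℕ → ℝ) : Prop :=
  ∀ f : Fin ℓ → (Fin m → ℤ) → ℕ → ℂ, Admissible Q d lam f →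
    (∀ r, GSGrowth m n σ μ (f r)) →
    ∃ u : (Fin m → ℤ) → ℕ → ℂ, GSGrowth m n σ μ u ∧
      ∀ r τ j, symb Q d lam r τ j * u τ j = f r τ j

/-! Both directions are pointwise in `(τ, j)`. Where `‖σ(τ,j)‖ ≠ 0`, an admissible family is solved
by `u = f_r / σ_r` for an index `r` at which `|σ_r|` is maximal, so `|u| = |f_r| / ‖σ‖`, and (DC)
turns a growth bound on `f` into one on `u`. Conversely, the admissible family
`f_r = σ_r · e^{-ε w / 2} / ‖σ‖` is bounded, and any solution equals `e^{-ε w / 2} / ‖σ‖` wherever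
`‖σ‖ ≠ 0`; its growth at rate `ε / 2` is exactly (DC) at rate `ε`. -/

section FiniteSupNorm

variable {ι E : Type*} [Finite ι] [NormedAddCommGroup E] (s : ι → E)

lemma norm_le_iSup_norm (r : ι) : ‖s r‖ ≤ ⨆ i, ‖s i‖ :=
  le_ciSup (f := fun i => ‖s i‖) (Set.finite_range _).bddAbove r

lemma eq_zero_of_iSup_norm_eq_zero (h : ⨆ i, ‖s i‖ = 0) (r : ι) : s r = 0 :=
  norm_le_zero_iff.mp (h ▸ norm_le_iSup_norm s r)

lemma exists_ne_zero_norm_eq_iSup_norm (h : ⨆ i, ‖s i‖ ≠ 0) :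
    ∃ r, s r ≠ 0 ∧ ‖s r‖ = ⨆ i, ‖s i‖ := by
  cases isEmpty_or_nonempty ι
  · exact absurd (Real.iSup_of_isEmpty _) h
  obtain ⟨r, hr⟩ : ∃ r, ‖s r‖ = ⨆ i, ‖s i‖ := exists_eq_ciSup_of_finite
  exact ⟨r, fun h0 => h (by rw [← hr, h0, norm_zero]), hr⟩

end FiniteSupNorm

lemma le_of_exp_neg_half_div_le {x N C : ℝ} (hN : 0 < N) (hC : 0 < C)
    (h : Real.exp (-(x / 2)) / N ≤ C * Real.exp (x / 2)) : C⁻¹ * Real.exp (-x) ≤ N := by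
  rw [div_le_iff₀ hN] at h
  rw [inv_mul_le_iff₀ hC, show -x = -(x / 2) + -(x / 2) by ring, Real.exp_add]
  calc Real.exp (-(x / 2)) * Real.exp (-(x / 2))
        ≤ C * Real.exp (x / 2) * N * Real.exp (-(x / 2)) :=
        mul_le_mul_of_nonneg_right h (Real.exp_pos _).le
    _ = C * N := by rw [mul_right_comm, mul_assoc C, ← Real.exp_add, add_neg_cancel,
          Real.exp_zero, mul_one]

lemma mul_exp_half_div_mul_exp_neg_half (A C x : ℝ) :
    A * Real.exp (x / 2) / (C * Real.exp (-(x / 2))) = A / C * Real.exp x := by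
  rw [mul_div_mul_comm, ← Real.exp_sub, sub_neg_eq_add, add_halves]

lemma wgt_nonneg (m n : ℕ) (σ μ : ℝ) (τ : Fin m → ℤ) (j : ℕ) : 0 ≤ wgt m n σ μ τ j :=
  add_nonneg (Real.rpow_nonneg (Real.sqrt_nonneg _) _) (Real.rpow_nonneg (Nat.cast_nonneg _) _)

section Growth

variable {m n : ℕ} {σ μ : ℝ}

lemma GSGrowth.of_norm_le {a : (Fin m → ℤ) → ℕ → ℂ} {B : ℝ} (h : ∀ τ j, ‖a τ j‖ ≤ B) :
    GSGrowth m n σ μ a := by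
  intro ε hε
  refine ⟨max B 1, by positivity, fun τ j => ?_⟩
  have : 1 ≤ Real.exp (ε * wgt m n σ μ τ j) :=
    Real.one_le_exp_iff.mpr (mul_nonneg hε.le (wgt_nonneg m n σ μ τ j))
  calc ‖a τ j‖ ≤ max B 1 := (h τ j).trans (le_max_left _ _)
    _ ≤ max B 1 * Real.exp (ε * wgt m n σ μ τ j) := le_mul_of_one_le_right (by positivity) this

lemma GSGrowth.iSup_norm {ι : Type*} [Finite ι] {f : ι → (Fin m → ℤ) → ℕ → ℂ}
    (hf : ∀ r, GSGrowth m n σ μ (f r)) {ε : ℝ} (hε : 0 < ε) :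
    ∃ C > 0, ∀ τ j, ⨆ r, ‖f r τ j‖ ≤ C * Real.exp (ε * wgt m n σ μ τ j) := by
  choose C hC₀ hC using fun r => hf r ε hε
  obtain ⟨B, hB⟩ := (Set.finite_range C).bddAbove
  refine ⟨max B 1, by positivity, fun τ j => Real.iSup_le (fun r => ?_) (by positivity)⟩
  exact (hC r τ j).trans <| mul_le_mul_of_nonneg_right
    ((hB (Set.mem_range_self r)).trans (le_max_left _ _)) (Real.exp_pos _).le

end Growth

section Symbol

variable {m ℓ : ℕ} {Q : Fin ℓ → MvPolynomial (Fin m) ℂ} {d : Fin ℓ → ℂ} {lam : ℕ → ℝ}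

lemma symbNorm_nonneg (τ : Fin m → ℤ) (j : ℕ) : 0 ≤ symbNorm Q d lam τ j :=
  Real.iSup_nonneg fun _ => norm_nonneg _

lemma norm_symb_le_symbNorm (r : Fin ℓ) (τ : Fin m → ℤ) (j : ℕ) :
    ‖symb Q d lam r τ j‖ ≤ symbNorm Q d lam τ j :=
  norm_le_iSup_norm (fun r => symb Q d lam r τ j) r

lemma symb_eq_zero_of_symbNorm_eq_zero {τ : Fin m → ℤ} {j : ℕ} (h : symbNorm Q d lam τ j = 0)
    (r : Fin ℓ) : symb Q d lam r τ j = 0 :=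
  eq_zero_of_iSup_norm_eq_zero (fun r => symb Q d lam r τ j) h r

lemma eq_of_forall_symb_mul_eq {τ : Fin m → ℤ} {j : ℕ} (h : symbNorm Q d lam τ j ≠ 0) {u v : ℂ}
    (huv : ∀ r, symb Q d lam r τ j * u = symb Q d lam r τ j * v) : u = v := by
  obtain ⟨r, hr, -⟩ := exists_ne_zero_norm_eq_iSup_norm (fun r => symb Q d lam r τ j) h
  exact mul_left_cancel₀ hr (huv r)

lemma norm_symb_mul_div_symbNorm_le (r : Fin ℓ) (τ : Fin m → ℤ) (j : ℕ) {c : ℝ} (hc : 0 ≤ c) :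
    ‖symb Q d lam r τ j * ((c / symbNorm Q d lam τ j : ℝ) : ℂ)‖ ≤ c := by
  rw [norm_mul, Complex.norm_real, Real.norm_of_nonneg (div_nonneg hc (symbNorm_nonneg τ j))]
  by_cases h0 : symbNorm Q d lam τ j = 0
  · simpa [h0] using hc
  calc ‖symb Q d lam r τ j‖ * (c / symbNorm Q d lam τ j)
      ≤ symbNorm Q d lam τ j * (c / symbNorm Q d lam τ j) :=
        mul_le_mul_of_nonneg_right (norm_symb_le_symbNorm r τ j)
          (div_nonneg hc (symbNorm_nonneg τ j))
    _ = c := mul_div_cancel₀ c h0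

lemma admissible_symb_mul (g : (Fin m → ℤ) → ℕ → ℂ) :
    Admissible Q d lam fun r τ j => symb Q d lam r τ j * g τ j :=
  ⟨fun _ _ _ _ => mul_left_comm _ _ _, fun _ _ _ h => by simp [h]⟩

/-- When `‖σ(τ,j)‖ = 0` the bound forces `v = 0`, division by zero being zero. -/
lemma Admissible.exists_solution_at {f : Fin ℓ → (Fin m → ℤ) → ℕ → ℂ}
    (hf : Admissible Q d lam f) (τ : Fin m → ℤ) (j : ℕ) :
    ∃ v : ℂ, (∀ r, symb Q d lam r τ j * v = f r τ j) ∧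
      ‖v‖ ≤ (⨆ r, ‖f r τ j‖) / symbNorm Q d lam τ j := by
  by_cases h0 : symbNorm Q d lam τ j = 0
  · refine ⟨0, fun r => ?_, by simp [h0]⟩
    rw [mul_zero, hf.2 r τ j (symb_eq_zero_of_symbNorm_eq_zero h0 r)]
  obtain ⟨r₀, hr₀, hmax⟩ := exists_ne_zero_norm_eq_iSup_norm (fun r => symb Q d lam r τ j) h0
  refine ⟨f r₀ τ j / symb Q d lam r₀ τ j, fun r => ?_, ?_⟩
  · rw [← mul_div_assoc, hf.1 r r₀ τ j, mul_div_cancel_left₀ _ hr₀]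
  · rw [norm_div, hmax]
    exact div_le_div_of_nonneg_right (norm_le_iSup_norm (fun r => f r τ j) r₀)
      (symbNorm_nonneg τ j)

end Symbol

section Equivalence

variable {m n ℓ : ℕ} {σ μ : ℝ} {Q : Fin ℓ → MvPolynomial (Fin m) ℂ} {d : Fin ℓ → ℂ} {lam : ℕ → ℝ}

lemma dioCond_of_globallySolvable (hsolv : GloballySolvable m n ℓ σ μ Q d lam) :
    DioCond m n ℓ σ μ Q d lam := by
  intro ε hε
  set g : (Fin m → ℤ) → ℕ → ℂ := fun τ j =>
    ((Real.exp (-(ε * wgt m n σ μ τ j / 2)) / symbNorm Q d lam τ j : ℝ) : ℂ)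
  have hbdd (r : Fin ℓ) : GSGrowth m n σ μ fun τ j => symb Q d lam r τ j * g τ j :=
    GSGrowth.of_norm_le fun τ j => (norm_symb_mul_div_symbNorm_le r τ j (Real.exp_pos _).le).trans
      (Real.exp_le_one_iff.mpr (neg_nonpos.mpr (by positivity [wgt_nonneg m n σ μ τ j])))
  obtain ⟨u, hu, hsol⟩ := hsolv _ (admissible_symb_mul g) hbdd
  obtain ⟨C, hC, huC⟩ := hu (ε / 2) (half_pos hε)
  refine ⟨C⁻¹, inv_pos.mpr hC, fun τ j h0 => ?_⟩
  have hug : u τ j = g τ j := eq_of_forall_symb_mul_eq h0 (fun r => hsol r τ j)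
  have hgC := huC τ j
  rw [hug, Complex.norm_real, Real.norm_of_nonneg (div_nonneg (Real.exp_pos _).le
    (symbNorm_nonneg τ j)), div_mul_eq_mul_div] at hgC
  rw [neg_mul]
  exact le_of_exp_neg_half_div_le ((symbNorm_nonneg τ j).lt_of_ne' h0) hC hgC

lemma globallySolvable_of_dioCond (hdc : DioCond m n ℓ σ μ Q d lam) :
    GloballySolvable m n ℓ σ μ Q d lam := by
  intro f hf hfg
  choose u hu hbound using hf.exists_solution_at
  refine ⟨u, fun ε hε => ?_, fun r τ j => hu τ j r⟩
  obtain ⟨Cd, hCd, hdcε⟩ := hdc (ε / 2) (half_pos hε)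
  obtain ⟨Cf, hCf, hfε⟩ := GSGrowth.iSup_norm hfg (half_pos hε)
  refine ⟨Cf / Cd, div_pos hCf hCd, fun τ j => (hbound τ j).trans ?_⟩
  by_cases h0 : symbNorm Q d lam τ j = 0
  · rw [h0, div_zero]; positivity
  have hnum : ⨆ r, ‖f r τ j‖ ≤ Cf * Real.exp (ε * wgt m n σ μ τ j / 2) := by
    simpa only [div_mul_eq_mul_div] using hfε τ j
  have hden : Cd * Real.exp (-(ε * wgt m n σ μ τ j / 2)) ≤ symbNorm Q d lam τ j := by
    simpa only [neg_mul, div_mul_eq_mul_div] using hdcε τ j h0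
  calc (⨆ r, ‖f r τ j‖) / symbNorm Q d lam τ j
      ≤ Cf * Real.exp (ε * wgt m n σ μ τ j / 2) /
          (Cd * Real.exp (-(ε * wgt m n σ μ τ j / 2))) :=
        div_le_div₀ (by positivity) hnum (by positivity) hden
    _ = Cf / Cd * Real.exp (ε * wgt m n σ μ τ j) :=
        mul_exp_half_div_mul_exp_neg_half _ _ _

end Equivalence

theorem statement1_general (m n ℓ : ℕ) (σ μ : ℝ)
    (Q : Fin ℓ → MvPolynomial (Fin m) ℂ) (d : Fin ℓ → ℂ) (lam : ℕ → ℝ) :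
    GloballySolvable m n ℓ σ μ Q d lam ↔ DioCond m n ℓ σ μ Q d lam :=
  ⟨dioCond_of_globallySolvable, globallySolvable_of_dioCond⟩

/-- global solvability ⟺ (DC). -/
theorem statement1 (m n ℓ : ℕ) (hm : 1 ≤ m) (hn : 1 ≤ n) (hℓ : 1 ≤ ℓ)
    (σ μ : ℝ) (hσ : 1 ≤ σ) (hμ : 1 / 2 ≤ μ)
    (Q : Fin ℓ → MvPolynomial (Fin m) ℂ) (d : Fin ℓ → ℂ) (lam : ℕ → ℝ) :
    GloballySolvable m n ℓ σ μ Q d lam ↔ DioCond m n ℓ σ μ Q d lam :=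
  statement1_general m n ℓ σ μ Q d lam
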